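/- Let F be a free filter on ℕ and let κ be a cardinal with ω ≤ κ ≤ 𝔠. Then C_p(X_{F,κ}) is homeomorphic to (C_F)^κ, the κ-th power of C_F with the product topology. -/

import Mathlib

open Filter Topology Set

/-- The space `X_{F,κ} = (κ × ℕ) ∪ {∞}`: every point of `κ × ℕ` is isolated and the
neighborhoods of `∞ = none` are the sets `{∞} ∪ ⋃_{α} {α} × A_α` with every `A_α ∈ F`. -/
def XFtop (F : Filter ℕ) (ι : Type*) : TopologicalSpace (Option (ι × ℕ)) where
  IsOpen U := none ∈ U → ∀ α : ι, {n | some (α, n) ∈ U} ∈ F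
  isOpen_univ := fun _ _ => Filter.univ_mem
  isOpen_inter := fun U V hU hV hmem α => Filter.inter_mem (hU hmem.1 α) (hV hmem.2 α)
  isOpen_sUnion := fun S hS hmem α => by
    obtain ⟨U, hUS, hU⟩ := hmem
    exact Filter.mem_of_superset (hS U hUS hU α) fun n hn => ⟨U, hUS, hn⟩

/-- `C_p(X)`: continuous real-valued functions on `X` with the topology of pointwise
convergence (subspace of the product `ℝ^X`). -/
abbrev Cp (X : Type*) [TopologicalSpace X] : Type _ := {f : X → ℝ // Continuous f}

/-- The Hilbert cube `Q = [-1,1]^ℕ` with the product topology. -/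
abbrev Hcube : Type := {f : ℕ → ℝ // ∀ n, f n ∈ Set.Icc (-1 : ℝ) 1}

/-- `K_F`: the points of the Hilbert cube that `F`-converge to `0`. -/
def KF (F : Filter ℕ) : Set Hcube :=
  {f | ∀ m : ℕ, {n | |f.val n| < (1 / 2) ^ m} ∈ F}

/-- `C_F = K_F ∩ (-1,1)^ℕ`. -/
def CF (F : Filter ℕ) : Set Hcube := KF F ∩ {f | ∀ n, |f.val n| < 1}

namespace CpXFaux

/-- Functions `F`-converging to `0`, with the pointwise topology. -/
abbrev C0 (F : Filter ℕ) := {g : ℕ → ℝ // Filter.Tendsto g F (nhds (0 : ℝ))}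

/-- Functions `F`-converging to `0` and vanishing at `0`. -/
abbrev Z0 (F : Filter ℕ) := {g : ℕ → ℝ // Filter.Tendsto g F (nhds (0 : ℝ)) ∧ g 0 = 0}

variable {F : Filter ℕ}

lemma ne_zero_mem (hfree : F ≤ Filter.cofinite) : {n : ℕ | n ≠ 0} ∈ F := by
  have : ({0}ᶜ : Set ℕ) ∈ Filter.cofinite := (Set.finite_singleton 0).compl_mem_cofinite
  exact hfree this

/-- Splitting off the 0-th coordinate: `C0 ≃ₜ ℝ × Z0`. -/
noncomputable def splitHomeo (hfree : F ≤ Filter.cofinite) : C0 F ≃ₜ ℝ × Z0 F where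
  toFun g := (g.1 0, ⟨Function.update g.1 0 0, by
    constructor
    · refine g.2.congr' ?_
      filter_upwards [ne_zero_mem hfree] with n hn
      exact (Function.update_of_ne hn _ _).symm
    · simp⟩)
  invFun p := ⟨Function.update p.2.1 0 p.1, by
    refine p.2.2.1.congr' ?_
    filter_upwards [ne_zero_mem hfree] with n hn
    exact (Function.update_of_ne hn _ _).symm⟩
  left_inv g := by
    apply Subtype.ext
    funext n
    by_cases hn : n = 0 <;> simp [hn, Function.update]
  right_inv p := by
    refine Prod.ext (by simp) ?_
    apply Subtype.ext
    funext n
    by_cases hn : n = 0 <;> simp [hn, Function.update, p.2.2.2]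
  continuous_toFun := by
    refine Continuous.prodMk ((continuous_apply 0).comp continuous_subtype_val) ?_
    refine Continuous.subtype_mk ?_ _
    refine continuous_pi fun n => ?_
    by_cases hn : n = 0
    · subst hn; simpa only [Function.update_self] using continuous_const
    · simp only [Function.update_of_ne hn]
      exact (continuous_apply n).comp continuous_subtype_val
  continuous_invFun := by
    refine Continuous.subtype_mk ?_ _
    refine continuous_pi fun n => ?_
    by_cases hn : n = 0
    · subst hn; simpa only [Function.update_self] using continuous_fst
    · simp only [Function.update_of_ne hn]
      exact (continuous_apply n).comp (continuous_subtype_val.comp continuous_snd)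

/-- `(Option ι → A) ≃ₜ A × (ι → A)`. -/
def optionArrowHomeo (ι A : Type*) [TopologicalSpace A] : (Option ι → A) ≃ₜ A × (ι → A) where
  toFun f := (f none, fun i => f (some i))
  invFun p := fun o => o.elim p.1 p.2
  left_inv f := funext fun o => by cases o <;> rfl
  right_inv _ := rfl
  continuous_toFun :=
    (continuous_apply none).prodMk (continuous_pi fun i => continuous_apply _)
  continuous_invFun := continuous_pi fun o => by
    cases o with
    | none => exact continuous_fst
    | some i => exact (continuous_apply i).comp continuous_snd

/-- `(ι → A × B) ≃ₜ (ι → A) × (ι → B)`. -/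
def arrowProdHomeo (ι A B : Type*) [TopologicalSpace A] [TopologicalSpace B] :
    (ι → A × B) ≃ₜ (ι → A) × (ι → B) where
  toFun f := (fun i => (f i).1, fun i => (f i).2)
  invFun p := fun i => (p.1 i, p.2 i)
  left_inv _ := rfl
  right_inv _ := rfl
  continuous_toFun :=
    (continuous_pi fun i => continuous_fst.comp (continuous_apply i)).prodMk
      (continuous_pi fun i => continuous_snd.comp (continuous_apply i))
  continuous_invFun := continuous_pi fun i =>
    ((continuous_apply i).comp continuous_fst).prodMk ((continuous_apply i).comp continuous_snd)

noncomputable def sq (r : ℝ) : ℝ := r / (1 + |r|)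
noncomputable def sq' (s : ℝ) : ℝ := s / (1 - |s|)

lemma one_add_abs_pos (r : ℝ) : 0 < 1 + |r| := by positivity

lemma abs_sq (r : ℝ) : |sq r| = |r| / (1 + |r|) := by
  rw [sq, abs_div, abs_of_pos (one_add_abs_pos r)]

lemma abs_sq_lt_one (r : ℝ) : |sq r| < 1 := by
  rw [abs_sq]
  rw [div_lt_one (one_add_abs_pos r)]
  linarith

lemma sq'_sq (r : ℝ) : sq' (sq r) = r := by
  have h := one_add_abs_pos r
  rw [sq', abs_sq, sq]
  have : 1 - |r| / (1 + |r|) = 1 / (1 + |r|) := by field_simp; ring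
  rw [this]
  field_simp

lemma sq_sq' {s : ℝ} (hs : |s| < 1) : sq (sq' s) = s := by
  have h : (0:ℝ) < 1 - |s| := by linarith
  have habs : |sq' s| = |s| / (1 - |s|) := by
    rw [sq', abs_div, abs_of_pos h]
  rw [sq, habs]
  have : 1 + |s| / (1 - |s|) = 1 / (1 - |s|) := by field_simp; ring
  rw [this, sq']
  field_simp

lemma continuous_sq : Continuous sq :=
  continuous_id.div (continuous_const.add continuous_abs) fun r => (one_add_abs_pos r).ne'

lemma continuousOn_sq' : ContinuousOn sq' {s : ℝ | |s| < 1} :=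
  continuousOn_id.div (continuousOn_const.sub continuous_abs.continuousOn)
    fun s hs => by simp only [Set.mem_setOf_eq] at hs; intro h; nlinarith [h]

lemma continuousAt_sq' : ContinuousAt sq' 0 := by
  have : {s : ℝ | |s| < 1} ∈ nhds (0:ℝ) := by
    have : Metric.ball (0:ℝ) 1 = {s : ℝ | |s| < 1} := by
      ext s; simp [Real.dist_eq]
    rw [← this]
    exact Metric.ball_mem_nhds 0 one_pos
  exact (continuousOn_sq'.continuousAt this)

lemma sq_zero : sq 0 = 0 := by simp [sq]
lemma sq'_zero : sq' 0 = 0 := by simp [sq']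

lemma mem_KF_iff {F : Filter ℕ} (f : Hcube) :
    f ∈ KF F ↔ Filter.Tendsto f.1 F (nhds (0 : ℝ)) := by
  constructor
  · intro h
    rw [Metric.tendsto_nhds]
    intro ε hε
    obtain ⟨m, hm⟩ := exists_pow_lt_of_lt_one hε (by norm_num : (1:ℝ)/2 < 1)
    filter_upwards [h m] with n hn
    rw [Real.dist_eq, sub_zero]
    exact lt_trans hn hm
  · intro h m
    have hε : (0:ℝ) < (1/2)^m := by positivity
    have := Metric.tendsto_nhds.mp h _ hε
    have h' : ∀ᶠ n in F, |f.val n| < (1/2)^m := by simpa [Real.dist_eq] using this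
    exact h'

/-- The squeezing homeomorphism `C0 F ≃ₜ CF F`. -/
noncomputable def squeezeHomeo (F : Filter ℕ) : C0 F ≃ₜ ↥(CF F) where
  toFun g := ⟨⟨fun n => sq (g.1 n), fun n => by
      constructor
      · linarith [abs_lt.mp (abs_sq_lt_one (g.1 n))|>.1]
      · linarith [abs_lt.mp (abs_sq_lt_one (g.1 n))|>.2]⟩, by
    constructor
    · rw [mem_KF_iff]
      have : Filter.Tendsto sq (nhds 0) (nhds 0) := by
        simpa [sq_zero] using continuous_sq.tendsto 0
      exact this.comp g.2
    · intro n; exact abs_sq_lt_one (g.1 n)⟩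
  invFun f := ⟨fun n => sq' (f.1.1 n), by
    have hT : Filter.Tendsto f.1.1 F (nhds 0) := (mem_KF_iff f.1).mp f.2.1
    have : Filter.Tendsto sq' (nhds 0) (nhds 0) := by
      simpa [ContinuousAt, sq'_zero] using continuousAt_sq'
    exact this.comp hT⟩
  left_inv g := by
    apply Subtype.ext; funext n; exact sq'_sq (g.1 n)
  right_inv f := by
    apply Subtype.ext; apply Subtype.ext; funext n; exact sq_sq' (f.2.2 n)
  continuous_toFun := by
    refine Continuous.subtype_mk (Continuous.subtype_mk ?_ _) _
    exact continuous_pi fun n =>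
      continuous_sq.comp ((continuous_apply n).comp continuous_subtype_val)
  continuous_invFun := by
    refine Continuous.subtype_mk ?_ _
    refine continuous_pi fun n => ?_
    refine continuousOn_sq'.comp_continuous ?_ ?_
    · exact (continuous_apply n).comp (continuous_subtype_val.comp continuous_subtype_val)
    · intro f; exact f.2.2 n

lemma isOpen_XF_iff (F : Filter ℕ) (ι : Type) (U : Set (Option (ι × ℕ))) :
    IsOpen[XFtop F ι] U ↔ (none ∈ U → ∀ α : ι, {n | some (α, n) ∈ U} ∈ F) := Iff.rfl

lemma continuous_XF_iff (F : Filter ℕ) (ι : Type) (f : Option (ι × ℕ) → ℝ) :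
    Continuous[XFtop F ι, _] f ↔
      ∀ α : ι, Filter.Tendsto (fun n => f (some (α, n))) F (nhds (f none)) := by
  letI := XFtop F ι
  constructor
  · intro hf α
    intro U hU
    obtain ⟨V, hVU, hV, hfV⟩ := mem_nhds_iff.mp hU
    have hopen : IsOpen[XFtop F ι] (f ⁻¹' V) := hf.isOpen_preimage V hV
    have := (isOpen_XF_iff F ι (f ⁻¹' V)).mp hopen hfV α
    exact Filter.mem_of_superset this fun n hn => hVU hn
  · intro h
    rw [continuous_def]
    intro V hV
    rw [isOpen_XF_iff]
    intro hnone α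
    exact (h α) (hV.mem_nhds hnone)

/-- `C_p(X_{F,ι}) ≃ₜ ℝ × (C0 F)^ι`. -/
noncomputable def CpHomeo (F : Filter ℕ) (ι : Type) :
    letI := XFtop F ι
    Cp (Option (ι × ℕ)) ≃ₜ ℝ × (ι → C0 F) := by
  letI := XFtop F ι
  exact {
    toFun := fun f => (f.1 none, fun α => ⟨fun n => f.1 (some (α, n)) - f.1 none, by
      simpa using ((continuous_XF_iff F ι f.1).mp f.2 α).sub_const (f.1 none)⟩)
    invFun := fun p => ⟨fun x => x.elim p.1 (fun q => (p.2 q.1).1 q.2 + p.1), by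
      rw [continuous_XF_iff]
      intro α
      simpa using ((p.2 α).2.add_const p.1)⟩
    left_inv := fun f => by
      apply Subtype.ext; funext x
      cases x with
      | none => rfl
      | some q => exact sub_add_cancel _ _
    right_inv := fun p => by
      refine Prod.ext rfl ?_
      funext α
      apply Subtype.ext; funext n
      exact add_sub_cancel_right _ _
    continuous_toFun := by
      refine Continuous.prodMk ((continuous_apply none).comp continuous_subtype_val) ?_
      refine continuous_pi fun α => Continuous.subtype_mk ?_ _
      refine continuous_pi fun n => ?_
      exact ((continuous_apply (some (α, n))).comp continuous_subtype_val).sub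
        ((continuous_apply none).comp continuous_subtype_val)
    continuous_invFun := by
      refine Continuous.subtype_mk ?_ _
      refine continuous_pi fun x => ?_
      cases x with
      | none => exact continuous_fst
      | some q =>
        exact (((continuous_apply q.2).comp (continuous_subtype_val.comp
          ((continuous_apply q.1).comp continuous_snd :
            Continuous fun p : ℝ × (ι → C0 F) => p.2 q.1)))).add continuous_fst }

end CpXFaux

open CpXFaux in
/-- For a free filter `F` on `ℕ` and an index set `ι` of infinite cardinality at most the
continuum, the space `C_p(X_{F,ι})` is homeomorphic to the power `(C_F)^ι`. -/
theorem Cp_XF_homeomorph_pow_CF (F : Filter ℕ) (hproper : F.NeBot)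
    (hfree : F ≤ Filter.cofinite) (ι : Type)
    (h1 : Cardinal.aleph0 ≤ Cardinal.mk ι) (h2 : Cardinal.mk ι ≤ Cardinal.continuum) :
    letI := XFtop F ι
    Nonempty (Cp (Option (ι × ℕ)) ≃ₜ (ι → ↥(CF F))) := by
  letI := XFtop F ι
  obtain ⟨e⟩ : Nonempty (Option ι ≃ ι) := by
    rw [← Cardinal.eq]
    rw [Cardinal.mk_option]
    exact Cardinal.add_one_eq h1
  have absorb : ℝ × (ι → ℝ) ≃ₜ (ι → ℝ) :=
    (optionArrowHomeo ι ℝ).symm.trans (Homeomorph.piCongrLeft (Y := fun _ => ℝ) e)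
  exact ⟨(CpHomeo F ι).trans <|
    (Homeomorph.prodCongr (Homeomorph.refl ℝ)
      ((Homeomorph.piCongrRight fun _ => splitHomeo hfree).trans
        (arrowProdHomeo ι ℝ (Z0 F)))).trans <|
    (Homeomorph.prodAssoc ℝ (ι → ℝ) (ι → Z0 F)).symm.trans <|
    (Homeomorph.prodCongr absorb (Homeomorph.refl (ι → Z0 F))).trans <|
    (arrowProdHomeo ι ℝ (Z0 F)).symm.trans <|
    (Homeomorph.piCongrRight fun _ => (splitHomeo hfree).symm).trans <|
    Homeomorph.piCongrRight fun _ => squeezeHomeo F⟩
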